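/- The sets J_π, as π ranges over all set partitions of [n], form a partition of U_n(K): every upper unitriangular matrix A belongs to exactly one J_π. -/

import Mathlib

open scoped BigOperators
open Finset Classical

/-- Two indices lie in the same block of the set partition `P` of `[n]`. -/
def SameBlock {n : ℕ} (P : Finpartition (Finset.univ : Finset (Fin n))) (i j : Fin n) : Prop :=
  ∃ B ∈ P.parts, i ∈ B ∧ j ∈ B

/-- `(i,j)` is an arc of `P`: same block, `i < j`, no element of that block strictly between. -/
def IsArc {n : ℕ} (P : Finpartition (Finset.univ : Finset (Fin n))) (i j : Fin n) : Prop :=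
  i < j ∧ SameBlock P i j ∧ ∀ k : Fin n, i < k → k < j → ¬ SameBlock P i k

/-- The set of arcs `D(π)`. -/
noncomputable def arcs {n : ℕ} (P : Finpartition (Finset.univ : Finset (Fin n))) :
    Finset (Fin n × Fin n) :=
  Finset.univ.filter (fun p => IsArc P p.1 p.2)

/-- `d(π)`, the number of arcs. -/
noncomputable def dP {n : ℕ} (P : Finpartition (Finset.univ : Finset (Fin n))) : ℕ :=
  (arcs P).card

/-- `dim(π) = Σ_{(i,j) ∈ D(π)} (j - i)`. -/
noncomputable def dimP {n : ℕ} (P : Finpartition (Finset.univ : Finset (Fin n))) : ℕ :=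
  ∑ p ∈ arcs P, (p.2.val - p.1.val)

/-- `crs(π)`, the number of crossings, i.e. pairs of arcs `(i,j), (k,l)` with `i<k<j<l`. -/
noncomputable def crsP {n : ℕ} (P : Finpartition (Finset.univ : Finset (Fin n))) : ℕ :=
  (((arcs P) ×ˢ (arcs P)).filter
    (fun q => q.1.1 < q.2.1 ∧ q.2.1 < q.1.2 ∧ q.1.2 < q.2.2)).card

/-- `(i,j)` is a `π`-singular pair. -/
def SingularPair {n : ℕ} (P : Finpartition (Finset.univ : Finset (Fin n))) (i j : Fin n) : Prop :=
  i < j ∧ ((∃ k : Fin n, k < i ∧ IsArc P k j) ∨ (∃ l : Fin n, j < l ∧ IsArc P i l))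

/-- `(i,j)` is a `π`-regular pair. -/
def RegularPair {n : ℕ} (P : Finpartition (Finset.univ : Finset (Fin n))) (i j : Fin n) : Prop :=
  i < j ∧ ¬ ((∃ k : Fin n, k < i ∧ IsArc P k j) ∨ (∃ l : Fin n, j < l ∧ IsArc P i l))

/-- The set `Sing(π)` of singular pairs. -/
noncomputable def singP {n : ℕ} (P : Finpartition (Finset.univ : Finset (Fin n))) :
    Finset (Fin n × Fin n) :=
  Finset.univ.filter (fun p => SingularPair P p.1 p.2)

/-- The set `reg(π)` of regular pairs. -/
noncomputable def regP {n : ℕ} (P : Finpartition (Finset.univ : Finset (Fin n))) :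
    Finset (Fin n × Fin n) :=
  Finset.univ.filter (fun p => RegularPair P p.1 p.2)

/-- The set `J_π` of upper unitriangular matrices with nonzero entries at arcs,
zero entries at regular non-arc pairs, arbitrary entries at singular pairs. -/
noncomputable def Jset {n : ℕ} (K : Type*) [Field K] [Fintype K] [DecidableEq K]
    (P : Finpartition (Finset.univ : Finset (Fin n))) :
    Finset (Matrix (Fin n) (Fin n) K) :=
  Finset.univ.filter (fun A =>
    (∀ i : Fin n, A i i = 1) ∧
    (∀ i j : Fin n, j < i → A i j = 0) ∧
    (∀ p ∈ arcs P, A p.1 p.2 ≠ 0) ∧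
    (∀ i j : Fin n, RegularPair P i j → ¬ IsArc P i j → A i j = 0))

/-
A unitriangular matrix determines the arcs of its partition recursively: `(i, j)` is an arc
exactly when `A i j ≠ 0` and no arc has already been placed ending at `j` from further left
or starting at `i` towards further right. Membership `A ∈ J_π` says precisely that the arcs
of `π` solve this recursion, which has a unique solution (by induction on `i + (n - j)`).
That solution is strictly increasing, left and right unique, so it is the arc relation of
the partition it generates; and a partition of `[n]` is determined by its arcs, since
consecutive elements of a block are joined by an arc.
-/

open Relation

namespace Finpartition

variable {α : Type*} [DecidableEq α] {s : Finset α}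

theorem mem_parts_iff_exists_part_eq {P : Finpartition s} {t : Finset α} :
    t ∈ P.parts ↔ ∃ a ∈ s, P.part a = t :=
  ⟨fun ht => P.part_surjOn ht, fun ⟨_, ha, hat⟩ => hat ▸ P.part_mem.2 ha⟩

theorem ext_of_part {P Q : Finpartition s} (h : ∀ a, P.part a = Q.part a) : P = Q := by
  ext t
  simp only [mem_parts_iff_exists_part_eq, h]

end Finpartition

namespace Relation

variable {α : Type*} {r : α → α → Prop} {a b : α}

theorem eqvGen_iff_reflTransGen_or_reflTransGen (hr : Relator.BiUnique r) :
    EqvGen r a b ↔ ReflTransGen r a b ∨ ReflTransGen r b a := by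
  refine ⟨fun h => ?_, fun h => h.elim (EqvGen.reflTransGen_le_eqvGen r a b)
    fun h => .symm _ _ (EqvGen.reflTransGen_le_eqvGen r b a h)⟩
  induction h with
  | rel a b hab => exact Or.inl (.single hab)
  | refl a => exact Or.inl .refl
  | symm a b _ ih => exact ih.symm
  | trans a b c _ _ ih₁ ih₂ =>
    rcases ih₁ with h₁ | h₁ <;> rcases ih₂ with h₂ | h₂
    · exact Or.inl (h₁.trans h₂)
    · have hswap : Relator.RightUnique (Function.swap r) := fun _ _ _ h h' => hr.1 h h'
      simpa only [reflTransGen_swap, or_comm] using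
        (reflTransGen_swap.2 h₁).total_of_right_unique hswap (reflTransGen_swap.2 h₂)
    · exact ReflTransGen.total_of_right_unique hr.2 h₁ h₂
    · exact Or.inr (h₂.trans h₁)

theorem ReflTransGen.le_of_forall_lt [Preorder α] (hr : ∀ a b, r a b → a < b)
    (h : ReflTransGen r a b) : a ≤ b := by
  induction h with
  | refl => exact le_rfl
  | tail _ hbc ih => exact ih.trans (hr _ _ hbc).le

end Relation

variable {n : ℕ}

section Partition

variable {P Q : Finpartition (Finset.univ : Finset (Fin n))} {i j : Fin n}

theorem sameBlock_iff_part_eq : SameBlock P i j ↔ P.part i = P.part j := by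
  rw [← P.mem_part_iff_part_eq_part (mem_univ i) (mem_univ j), P.mem_part_iff_exists]
  exact exists_congr fun B => by tauto

theorem sameBlock_equivalence (P : Finpartition (Finset.univ : Finset (Fin n))) :
    Equivalence (SameBlock P) := by
  refine ⟨fun _ => ?_, fun h => ?_, fun h h' => ?_⟩ <;> simp_all only [sameBlock_iff_part_eq]

theorem sameBlock_ofSetoid (s : Setoid (Fin n)) :
    SameBlock (Finpartition.ofSetoid s) i j ↔ s i j := by
  rw [sameBlock_iff_part_eq,
    ← (Finpartition.ofSetoid s).mem_part_iff_part_eq_part (mem_univ i) (mem_univ j),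
    Finpartition.mem_part_ofSetoid_iff_rel]
  exact s.comm'

theorem isArc_biUnique (P : Finpartition (Finset.univ : Finset (Fin n))) :
    Relator.BiUnique (IsArc P) := by
  have hb := sameBlock_equivalence P
  refine ⟨fun i k j h h' => ?_, fun i j l h h' => ?_⟩
  · by_contra hik
    rcases lt_or_gt_of_ne hik with hik | hki
    · exact h.2.2 k hik h'.1 (hb.trans h.2.1 (hb.symm h'.2.1))
    · exact h'.2.2 i hki h.1 (hb.trans h'.2.1 (hb.symm h.2.1))
  · by_contra hjl
    rcases lt_or_gt_of_ne hjl with hjl | hlj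
    · exact h'.2.2 j h.1 hjl h.2.1
    · exact h.2.2 l h'.1 hlj h'.2.1

/-- The last element of the block before `j` that is `≥ i` is joined to `j` by an arc. -/
theorem reflTransGen_isArc_of_sameBlock (j : Fin n) :
    ∀ i ≤ j, SameBlock P i j → ReflTransGen (IsArc P) i j := by
  induction j using WellFoundedLT.induction with
  | _ j ih =>
    intro i hij hsb
    rcases hij.eq_or_lt with rfl | hij
    · exact .refl
    have hb := sameBlock_equivalence P
    set S := univ.filter fun k => i ≤ k ∧ k < j ∧ SameBlock P k j
    have hS : S.Nonempty := ⟨i, by simp [S, hij, hsb]⟩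
    have hkS := S.max'_mem hS
    set k := S.max' hS
    obtain ⟨-, hik, hkj, hkb⟩ := mem_filter.1 hkS
    have harc : IsArc P k j := by
      refine ⟨hkj, hkb, fun m hkm hmj hm => hkm.not_ge (S.le_max' m ?_)⟩
      simpa [S, hmj, (hik.trans hkm.le)] using hb.trans (hb.symm hm) hkb
    exact (ih _ hkj i hik (hb.trans hsb (hb.symm hkb))).tail harc

theorem sameBlock_iff_eqvGen_isArc : SameBlock P i j ↔ EqvGen (IsArc P) i j := by
  have hb := sameBlock_equivalence P
  refine ⟨fun h => ?_, fun h => hb.eqvGen_iff.1 (EqvGen.mono (fun _ _ h => h.2.1) _ _ h)⟩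
  rcases le_total i j with hij | hji
  · exact EqvGen.reflTransGen_le_eqvGen _ _ _ (reflTransGen_isArc_of_sameBlock j i hij h)
  · exact .symm _ _ <|
      EqvGen.reflTransGen_le_eqvGen _ _ _ (reflTransGen_isArc_of_sameBlock i j hji (hb.symm h))

theorem eq_of_isArc_eq (h : IsArc P = IsArc Q) : P = Q := by
  refine Finpartition.ext_of_part fun i => Finset.ext fun j => ?_
  rw [P.mem_part_iff_part_eq_part (mem_univ j) (mem_univ i),
    Q.mem_part_iff_part_eq_part (mem_univ j) (mem_univ i), ← sameBlock_iff_part_eq,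
    ← sameBlock_iff_part_eq, sameBlock_iff_eqvGen_isArc, sameBlock_iff_eqvGen_isArc, h]

theorem isArc_ofSetoid_eqvGen {R : Fin n → Fin n → Prop} (hR : ∀ i j, R i j → i < j)
    (hu : Relator.BiUnique R) : IsArc (Finpartition.ofSetoid (EqvGen.setoid R)) = R := by
  have hsb : ∀ {a b}, SameBlock (Finpartition.ofSetoid (EqvGen.setoid R)) a b ↔
      ReflTransGen R a b ∨ ReflTransGen R b a :=
    (sameBlock_ofSetoid _).trans (eqvGen_iff_reflTransGen_or_reflTransGen hu)
  have hle {a b} : ReflTransGen R a b → a ≤ b := ReflTransGen.le_of_forall_lt hR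
  ext i j
  constructor
  · rintro ⟨hij, hij', hmin⟩
    obtain hr | hr := hsb.1 hij'
    · obtain rfl | ⟨m, him, hmj⟩ := hr.cases_head
      · exact absurd hij (lt_irrefl i)
      obtain rfl | hmj' := (hle hmj).eq_or_lt
      · exact him
      · exact absurd (hsb.2 (Or.inl (.single him))) (hmin m (hR _ _ him) hmj')
    · exact absurd (hle hr) hij.not_ge
  · intro h
    refine ⟨hR _ _ h, hsb.2 (Or.inl (.single h)), fun k hik hkj hk => ?_⟩
    obtain hr | hr := hsb.1 hk
    · obtain rfl | ⟨m, him, hmk⟩ := hr.cases_head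
      · exact absurd hik (lt_irrefl i)
      cases hu.2 him h
      exact absurd (hle hmk) hkj.not_ge
    · exact absurd (hle hr) hik.not_ge

theorem regularPair_iff :
    RegularPair P i j ↔
      i < j ∧ (∀ k < i, ¬ IsArc P k j) ∧ (∀ l, j < l → ¬ IsArc P i l) := by
  simp only [RegularPair, not_or, not_exists, not_and]

theorem IsArc.regularPair (h : IsArc P i j) : RegularPair P i j :=
  regularPair_iff.2 ⟨h.1, fun _ hk hk' => hk.ne ((isArc_biUnique P).1 hk' h),
    fun _ hl hl' => hl.ne ((isArc_biUnique P).2 h hl')⟩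

end Partition

section Matrix

variable {K : Type*} [Zero K] (A : Matrix (Fin n) (Fin n) K)

def ArcEquation (R : Fin n → Fin n → Prop) : Prop :=
  ∀ i j, R i j ↔ A i j ≠ 0 ∧ i < j ∧ (∀ k < i, ¬ R k j) ∧ (∀ l, j < l → ¬ R i l)

def matrixArc (i j : Fin n) : Prop :=
  A i j ≠ 0 ∧ i < j ∧ (∀ k < i, ¬ matrixArc k j) ∧ (∀ l, j < l → ¬ matrixArc i l)
termination_by i.val + (n - j.val)
decreasing_by all_goals omega

theorem arcEquation_matrixArc : ArcEquation A (matrixArc A) := fun i j => by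
  rw [matrixArc]

variable {A} {R S : Fin n → Fin n → Prop}

theorem ArcEquation.lt (hR : ArcEquation A R) {i j : Fin n} (h : R i j) : i < j :=
  ((hR i j).1 h).2.1

theorem ArcEquation.biUnique (hR : ArcEquation A R) : Relator.BiUnique R := by
  refine ⟨fun i k j h h' => ?_, fun i j l h h' => ?_⟩
  · by_contra hik
    rcases lt_or_gt_of_ne hik with hik | hki
    · exact ((hR k j).1 h').2.2.1 i hik h
    · exact ((hR i j).1 h).2.2.1 k hki h'
  · by_contra hjl
    rcases lt_or_gt_of_ne hjl with hjl | hlj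
    · exact ((hR i j).1 h).2.2.2 l hjl h'
    · exact ((hR i l).1 h').2.2.2 j hlj h

theorem ArcEquation.unique (hR : ArcEquation A R) (hS : ArcEquation A S) : R = S := by
  ext i j
  induction hm : i.val + (n - j.val) using Nat.strong_induction_on generalizing i j with
  | _ m ih =>
    have hk : ∀ k < i, (R k j ↔ S k j) := fun k hk => ih _ (by omega) k j rfl
    have hl : ∀ l, j < l → (R i l ↔ S i l) := fun l hl => ih _ (by omega) i l rfl
    rw [hR, hS]
    refine and_congr_right fun _ => and_congr_right fun _ => and_congr ?_ ?_
    · exact forall₂_congr fun k hki => not_congr (hk k hki)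
    · exact forall₂_congr fun l hjl => not_congr (hl l hjl)

end Matrix

theorem mem_Jset_iff_arcEquation {K : Type*} [Field K] [Fintype K] [DecidableEq K]
    {A : Matrix (Fin n) (Fin n) K} (hdiag : ∀ i : Fin n, A i i = 1)
    (hlow : ∀ i j : Fin n, j < i → A i j = 0)
    {P : Finpartition (Finset.univ : Finset (Fin n))} :
    A ∈ Jset K P ↔ ArcEquation A (IsArc P) := by
  have hE : ArcEquation A (IsArc P) ↔
      ∀ i j, IsArc P i j ↔ A i j ≠ 0 ∧ RegularPair P i j := by
    simp only [ArcEquation, regularPair_iff]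
  rw [hE, Jset, mem_filter, and_iff_right (mem_univ A), and_iff_right hdiag, and_iff_right hlow]
  simp only [arcs, mem_filter, mem_univ, true_and, Prod.forall]
  constructor
  · rintro ⟨harc, hreg⟩ i j
    refine ⟨fun h => ⟨harc _ _ h, h.regularPair⟩, fun ⟨h0, hij⟩ => ?_⟩
    by_contra hna
    exact h0 (hreg i j hij hna)
  · intro h
    refine ⟨fun i j hij => ((h i j).1 hij).1, fun i j hij hna => ?_⟩
    by_contra h0
    exact hna ((h i j).2 ⟨h0, hij⟩)

theorem stmt13 (n : ℕ) (K : Type*) [Field K] [Fintype K] [DecidableEq K]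
    (A : Matrix (Fin n) (Fin n) K)
    (hdiag : ∀ i : Fin n, A i i = 1) (hlow : ∀ i j : Fin n, j < i → A i j = 0) :
    ∃! P : Finpartition (Finset.univ : Finset (Fin n)), A ∈ Jset K P := by
  have hR := arcEquation_matrixArc A
  have hP : IsArc (Finpartition.ofSetoid (EqvGen.setoid (matrixArc A))) = matrixArc A :=
    isArc_ofSetoid_eqvGen (fun _ _ => hR.lt) hR.biUnique
  refine ⟨_, (mem_Jset_iff_arcEquation hdiag hlow).2 (hP ▸ hR), fun Q hQ => eq_of_isArc_eq ?_⟩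
  rw [hP]
  exact ((mem_Jset_iff_arcEquation hdiag hlow).1 hQ).unique hR
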